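/- arXiv:2303.11382 — 5 statements merged into one kernel-verified Lean document; each statement's English description precedes it below -/
import Mathlib

section
/- (Gibbs variational principle.) Let L be a self-adjoint (Hermitian) complex n×n matrix and let ρ be a density matrix on ℂ^n. Then Re tr(ρ L) ≥ S(ρ) − log(Re tr(exp(−L))), where exp is the matrix exponential. -/
/-!
Diagonalize `ρ = ∑ pᵢ |uᵢ⟩⟨uᵢ|`, so that `Re tr(ρ L) = ∑ pᵢ aᵢ` with `aᵢ = Re ⟪uᵢ, L uᵢ⟫`.
Expanding `uᵢ` in an eigenbasis `(vⱼ)` of `L` writes `aᵢ` as the convex combination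
`∑ⱼ |⟪vⱼ, uᵢ⟫|² εⱼ` of the eigenvalues of `L`, with doubly stochastic weights; Jensen's inequality
for `t ↦ exp (-t)` then gives Peierls' inequality `∑ᵢ exp (-aᵢ) ≤ ∑ⱼ exp (-εⱼ) = tr exp (-L)`.
What remains is the classical Gibbs inequality `-∑ pᵢ log pᵢ - log Z ≤ ∑ pᵢ aᵢ` whenever
`∑ exp (-aᵢ) ≤ Z`, which follows termwise from `log x ≤ x - 1`.
-/

open scoped BigOperators ComplexOrder

/-- Von Neumann entropy: `-∑ λᵢ log λᵢ` over the eigenvalues of a Hermitian matrix. -/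
noncomputable def vonNeumannEntropy {n : ℕ} (ρ : Matrix (Fin n) (Fin n) ℂ) : ℝ :=
  if h : ρ.IsHermitian then -∑ i, h.eigenvalues i * Real.log (h.eigenvalues i) else 0

open scoped InnerProductSpace
open RCLike

namespace Real

lemma convexOn_exp_neg : ConvexOn ℝ Set.univ fun x ↦ exp (-x) :=
  convexOn_exp.comp_linearMap (-LinearMap.id)

lemma sub_le_mul_log_sub_log {p y : ℝ} (hp : 0 ≤ p) (hy : 0 < y) : p - y ≤ p * (log p - log y) := by
  rcases hp.eq_or_lt with rfl | hp
  · simpa using hy.le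
  have h := log_le_sub_one_of_pos (div_pos hy hp)
  rw [log_div hy.ne' hp.ne'] at h
  have h' := mul_le_mul_of_nonneg_left h hp.le
  rw [mul_sub_one, mul_div_cancel₀ _ hp.ne'] at h'
  linarith

theorem neg_sum_mul_log_sub_log_le_sum_mul {ι : Type*} [Fintype ι] {p a : ι → ℝ} {Z : ℝ}
    (hp : ∀ i, 0 ≤ p i) (hp1 : ∑ i, p i = 1) (hZ : ∑ i, exp (-a i) ≤ Z) :
    -∑ i, p i * log (p i) - log Z ≤ ∑ i, p i * a i := by
  obtain ⟨i₀, -, -⟩ := Finset.exists_ne_zero_of_sum_ne_zero (hp1 ▸ one_ne_zero)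
  have hZpos : 0 < Z := (exp_pos _).trans_le
    ((Finset.single_le_sum (fun j _ ↦ (exp_pos (-a j)).le) (Finset.mem_univ i₀)).trans hZ)
  have key (i : ι) : p i - exp (-a i) / Z ≤ p i * log (p i) + p i * a i + p i * log Z := by
    have h := sub_le_mul_log_sub_log (hp i) (div_pos (exp_pos (-a i)) hZpos)
    rw [log_div (exp_pos _).ne' hZpos.ne', log_exp] at h
    linarith
  have hsum := Finset.sum_le_sum fun i (_ : i ∈ Finset.univ) ↦ key i
  rw [Finset.sum_sub_distrib, ← Finset.sum_div, Finset.sum_add_distrib, Finset.sum_add_distrib,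
    ← Finset.sum_mul, hp1] at hsum
  have hexp : (∑ i, exp (-a i)) / Z ≤ 1 := (div_le_one hZpos).2 hZ
  linarith

end Real

namespace LinearMap.IsSymmetric
variable {𝕜 E ι κ : Type*} [RCLike 𝕜] [NormedAddCommGroup E] [InnerProductSpace 𝕜 E]
  [Fintype ι] [Fintype κ] {T : E →ₗ[𝕜] E}

lemma re_inner_apply_self_eq_sum (hT : T.IsSymmetric) (b : OrthonormalBasis ι 𝕜 E) {μ : ι → ℝ}
    (hb : ∀ j, T (b j) = (μ j : 𝕜) • b j) (x : E) :
    re ⟪x, T x⟫_𝕜 = ∑ j, ‖⟪b j, x⟫_𝕜‖ ^ 2 * μ j := by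
  rw [← b.sum_inner_mul_inner x (T x), map_sum]
  refine Finset.sum_congr rfl fun j _ ↦ ?_
  rw [← hT, hb, inner_smul_left, conj_ofReal, ← inner_conj_symm x, mul_left_comm, RCLike.conj_mul,
    ← ofReal_pow, ← ofReal_mul, ofReal_re, mul_comm]

theorem sum_comp_re_inner_le_of_convexOn (hT : T.IsSymmetric) (b : OrthonormalBasis ι 𝕜 E)
    {μ : ι → ℝ} (hb : ∀ j, T (b j) = (μ j : 𝕜) • b j) (c : OrthonormalBasis κ 𝕜 E)
    {f : ℝ → ℝ} (hf : ConvexOn ℝ Set.univ f) :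
    ∑ i, f (re ⟪c i, T (c i)⟫_𝕜) ≤ ∑ j, f (μ j) := by
  calc ∑ i, f (re ⟪c i, T (c i)⟫_𝕜) = ∑ i, f (∑ j, ‖⟪b j, c i⟫_𝕜‖ ^ 2 • μ j) := by
        simp only [hT.re_inner_apply_self_eq_sum b hb, smul_eq_mul]
    _ ≤ ∑ i, ∑ j, ‖⟪b j, c i⟫_𝕜‖ ^ 2 • f (μ j) := Finset.sum_le_sum fun i _ ↦
        hf.map_sum_le (fun j _ ↦ by positivity)
          (by rw [b.sum_sq_norm_inner_right, c.orthonormal.1 i, one_pow])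
          (fun _ _ ↦ Set.mem_univ _)
    _ = ∑ j, f (μ j) := by
        rw [Finset.sum_comm]
        simp only [← Finset.sum_smul, c.sum_sq_norm_inner_left, b.orthonormal.1, one_pow, one_smul]

end LinearMap.IsSymmetric

namespace Matrix.IsHermitian
variable {𝕜 n : Type*} [RCLike 𝕜] [Fintype n] [DecidableEq n] {A : Matrix n n 𝕜}

lemma toEuclideanLin_eigenvectorBasis (hA : A.IsHermitian) (j : n) :
    toEuclideanLin A (hA.eigenvectorBasis j) = (hA.eigenvalues j : 𝕜) • hA.eigenvectorBasis j := by
  apply WithLp.ofLp_injective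
  rw [ofLp_toLpLin, toLin'_apply, hA.mulVec_eigenvectorBasis, WithLp.ofLp_smul,
    RCLike.real_smul_eq_coe_smul (K := 𝕜)]

lemma trace_exp_neg (hA : A.IsHermitian) :
    (NormedSpace.exp (-A)).trace = ∑ i, (Real.exp (-hA.eigenvalues i) : 𝕜) := by
  set U : Matrix n n 𝕜 := ↑hA.eigenvectorUnitary
  have hU : star U * U = 1 := Unitary.coe_star_mul_self _
  have hUinv : U⁻¹ = star U := inv_eq_left_inv hU
  have hneg : -A = U * diagonal (fun i ↦ ((-hA.eigenvalues i : ℝ) : 𝕜)) * U⁻¹ := by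
    conv_lhs => rw [hA.spectral_theorem]
    rw [← map_neg, diagonal_neg, Unitary.conjStarAlgAut_apply, hUinv]
    congr
    ext i
    simp
  rw [hneg, exp_conj _ _ ⟨⟨U, star U, Unitary.coe_mul_star_self _, hU⟩, rfl⟩, hUinv,
    trace_mul_cycle, hU, one_mul, exp_diagonal, trace_diagonal]
  refine Finset.sum_congr rfl fun i _ ↦ ?_
  rw [Pi.exp_def, Real.exp_eq_exp_ℝ]
  exact (NormedSpace.algebraMap_exp_comm (𝕂 := ℝ) _).symm

lemma trace_mul_eq_sum_eigenvalues_mul_inner (hA : A.IsHermitian) (B : Matrix n n 𝕜) :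
    (A * B).trace = ∑ i, (hA.eigenvalues i : 𝕜) *
      ⟪hA.eigenvectorBasis i, toEuclideanLin B (hA.eigenvectorBasis i)⟫_𝕜 := by
  rw [← trace_toLin_eq (A * B) (PiLp.basisFun 2 𝕜 n), ← toLpLin_eq_toLin,
    LinearMap.trace_eq_sum_inner _ hA.eigenvectorBasis]
  refine Finset.sum_congr rfl fun i _ ↦ ?_
  rw [toLpLin_mul_same, LinearMap.comp_apply, ← isSymmetric_toEuclideanLin_iff.mpr hA,
    toEuclideanLin_eigenvectorBasis, inner_smul_left, conj_ofReal]

end Matrix.IsHermitian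

/-- **Gibbs variational principle.** For a Hermitian matrix `L` and a density matrix `ρ`,
`Re tr(ρ L) ≥ S(ρ) - log (Re tr (exp (-L)))`. -/
theorem gibbs_variational_principle {n : ℕ} (L ρ : Matrix (Fin n) (Fin n) ℂ)
    (hL : L.IsHermitian) (hρ : ρ.PosSemidef) (hρtr : ρ.trace = 1) :
    ((ρ * L).trace).re ≥
      vonNeumannEntropy ρ - Real.log (((NormedSpace.exp (-L)).trace).re) := by
  set p := hρ.isHermitian.eigenvalues
  set u := hρ.isHermitian.eigenvectorBasis
  set a : Fin n → ℝ := fun i ↦ re ⟪u i, Matrix.toEuclideanLin L (u i)⟫_ℂ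
  have hmean : ((ρ * L).trace).re = ∑ i, p i * a i := by
    simp [hρ.isHermitian.trace_mul_eq_sum_eigenvalues_mul_inner, p, u, a]
  have hp1 : ∑ i, p i = 1 := by
    have h := hρ.isHermitian.trace_eq_sum_eigenvalues
    rw [hρtr] at h
    simpa [eq_comm] using congrArg Complex.re h
  have hZ : ((NormedSpace.exp (-L)).trace).re = ∑ j, Real.exp (-hL.eigenvalues j) := by
    rw [hL.trace_exp_neg, ← ofReal_sum]
    exact ofReal_re (K := ℂ) _
  have hpeierls : ∑ i, Real.exp (-a i) ≤ ∑ j, Real.exp (-hL.eigenvalues j) :=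
    (Matrix.isSymmetric_toEuclideanLin_iff.mpr hL).sum_comp_re_inner_le_of_convexOn
      hL.eigenvectorBasis hL.toEuclideanLin_eigenvectorBasis u Real.convexOn_exp_neg
  rw [ge_iff_le, hmean, hZ, vonNeumannEntropy, dif_pos hρ.isHermitian]
  exact Real.neg_sum_mul_log_sub_log_le_sum_mul hρ.eigenvalues_nonneg hp1 hpeierls
end

section
/- (Identity gives an upper bound.) Let C be a d×d doubly stochastic real matrix. Then for all exponents r, s ∈ [1, ∞], ‖C‖_{r→s} ≤ ‖𝟙_d‖_{r→s}, where 𝟙_d is the d×d identity matrix. -/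
open scoped BigOperators ENNReal

/-- The vector `p`-norm of a complex vector, for an exponent `p ∈ [1, ∞]`
(`p = ∞` gives the sup norm). -/
noncomputable def vecPNormE {n : Type*} [Fintype n] (p : ℝ≥0∞) (v : n → ℂ) : ℝ :=
  if p = ⊤ then ⨆ i, ‖v i‖ else (∑ i, ‖v i‖ ^ p.toReal) ^ (1 / p.toReal)

/-- The `(r → s)` operator norm of a complex matrix, for exponents in `[1, ∞]`. -/
noncomputable def matPNormE {m n : Type*} [Fintype m] [Fintype n] (r s : ℝ≥0∞)
    (C : Matrix m n ℂ) : ℝ :=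
  sSup {t : ℝ | ∃ φ : n → ℂ, φ ≠ 0 ∧ t = vecPNormE s (C.mulVec φ) / vecPNormE r φ}

lemma vecPNormE_nonneg {n : Type*} [Fintype n] (p : ℝ≥0∞) (v : n → ℂ) :
    0 ≤ vecPNormE p v := by
  unfold vecPNormE
  split_ifs
  · exact Real.iSup_nonneg fun i => norm_nonneg _
  · exact Real.rpow_nonneg
      (Finset.sum_nonneg fun i _ => Real.rpow_nonneg (norm_nonneg _) _) _

lemma one_le_toReal_of_ne_top {p : ℝ≥0∞} (hp : 1 ≤ p) (h : p ≠ ⊤) : 1 ≤ p.toReal := by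
  have := ENNReal.toReal_mono h hp
  simpa using this

lemma vecPNormE_pos {n : Type*} [Fintype n] {p : ℝ≥0∞} (hp : 1 ≤ p) {v : n → ℂ}
    (hv : v ≠ 0) : 0 < vecPNormE p v := by
  obtain ⟨i, hi⟩ : ∃ i, v i ≠ 0 := by
    by_contra h; push_neg at h; exact hv (funext h)
  have hni : 0 < ‖v i‖ := norm_pos_iff.mpr hi
  unfold vecPNormE
  split_ifs with h
  · exact hni.trans_le (le_ciSup (f := fun i => ‖v i‖) (Set.Finite.bddAbove (Set.finite_range _)) i)
  · have hp1 : 1 ≤ p.toReal := one_le_toReal_of_ne_top hp h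
    apply Real.rpow_pos_of_pos
    exact (Real.rpow_pos_of_pos hni _).trans_le
      (Finset.single_le_sum (fun j _ => Real.rpow_nonneg (norm_nonneg _) _)
        (Finset.mem_univ i))

/-- The `s`-norm is at most the `1`-norm. -/
lemma vecPNormE_le_sum {n : Type*} [Fintype n] {s : ℝ≥0∞} (hs : 1 ≤ s) (v : n → ℂ) :
    vecPNormE s v ≤ ∑ i, ‖v i‖ := by
  unfold vecPNormE
  split_ifs with h
  · refine Real.iSup_le (fun i => ?_) (Finset.sum_nonneg fun i _ => norm_nonneg _)
    exact Finset.single_le_sum (fun j _ => norm_nonneg _) (Finset.mem_univ i)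
  · have hp1 : 1 ≤ s.toReal := one_le_toReal_of_ne_top hs h
    have hp0 : 0 < s.toReal := zero_lt_one.trans_le hp1
    set S : ℝ := ∑ i, ‖v i‖ with hS
    have hS0 : 0 ≤ S := Finset.sum_nonneg fun i _ => norm_nonneg _
    have key : ∑ i, ‖v i‖ ^ s.toReal ≤ S ^ s.toReal := by
      calc ∑ i, ‖v i‖ ^ s.toReal ≤ ∑ i, S ^ (s.toReal - 1) * ‖v i‖ := by
            refine Finset.sum_le_sum fun i _ => ?_
            have h1 : ‖v i‖ ^ s.toReal = ‖v i‖ ^ (s.toReal - 1) * ‖v i‖ ^ (1:ℝ) := by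
              rw [← Real.rpow_add_of_nonneg (norm_nonneg _) (by linarith) zero_le_one]
              norm_num
            rw [h1, Real.rpow_one]
            refine mul_le_mul_of_nonneg_right ?_ (norm_nonneg _)
            refine Real.rpow_le_rpow (norm_nonneg _) ?_ (by linarith)
            exact Finset.single_le_sum (fun j _ => norm_nonneg _) (Finset.mem_univ i)
        _ = S ^ (s.toReal - 1) * S := by rw [← Finset.mul_sum]
        _ = S ^ s.toReal := by
            rw [show S ^ (s.toReal - 1) * S = S ^ (s.toReal - 1) * S ^ (1:ℝ) by
              rw [Real.rpow_one]]
            rw [← Real.rpow_add_of_nonneg hS0 (by linarith) zero_le_one]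
            norm_num
    calc (∑ i, ‖v i‖ ^ s.toReal) ^ (1 / s.toReal)
        ≤ (S ^ s.toReal) ^ (1 / s.toReal) :=
          Real.rpow_le_rpow (Finset.sum_nonneg fun i _ => Real.rpow_nonneg (norm_nonneg _) _)
            key (by positivity)
      _ = S := by
          rw [← Real.rpow_mul hS0, mul_one_div, div_self hp0.ne', Real.rpow_one]

/-- Each coordinate is at most the `r`-norm. -/
lemma norm_le_vecPNormE {n : Type*} [Fintype n] {r : ℝ≥0∞} (hr : 1 ≤ r) (v : n → ℂ)
    (i : n) : ‖v i‖ ≤ vecPNormE r v := by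
  unfold vecPNormE
  split_ifs with h
  · exact le_ciSup (f := fun i => ‖v i‖) (Set.Finite.bddAbove (Set.finite_range _)) i
  · have hp1 : 1 ≤ r.toReal := one_le_toReal_of_ne_top hr h
    have hp0 : 0 < r.toReal := zero_lt_one.trans_le hp1
    have h1 : ‖v i‖ ^ r.toReal ≤ ∑ j, ‖v j‖ ^ r.toReal :=
      Finset.single_le_sum (fun j _ => Real.rpow_nonneg (norm_nonneg _) _) (Finset.mem_univ i)
    calc ‖v i‖ = (‖v i‖ ^ r.toReal) ^ (1 / r.toReal) := by
          rw [← Real.rpow_mul (norm_nonneg _), mul_one_div, div_self hp0.ne', Real.rpow_one]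
      _ ≤ (∑ j, ‖v j‖ ^ r.toReal) ^ (1 / r.toReal) :=
          Real.rpow_le_rpow (Real.rpow_nonneg (norm_nonneg _) _) h1 (by positivity)

/-- Applying a doubly stochastic matrix does not increase any `s`-norm, `s ∈ [1,∞]`. -/
lemma vecPNormE_mulVec_le {d : ℕ} (C : Matrix (Fin d) (Fin d) ℝ)
    (hnn : ∀ i j, 0 ≤ C i j) (hrow : ∀ i, ∑ j, C i j = 1) (hcol : ∀ j, ∑ i, C i j = 1)
    {s : ℝ≥0∞} (hs : 1 ≤ s) (φ : Fin d → ℂ) :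
    vecPNormE s ((C.map Complex.ofReal).mulVec φ) ≤ vecPNormE s φ := by
  have key : ∀ i, ‖(C.map Complex.ofReal).mulVec φ i‖ ≤ ∑ j, C i j * ‖φ j‖ := by
    intro i
    rw [Matrix.mulVec, dotProduct]
    calc ‖∑ j, (C.map Complex.ofReal) i j * φ j‖
        ≤ ∑ j, ‖(C.map Complex.ofReal) i j * φ j‖ := norm_sum_le _ _
      _ = ∑ j, C i j * ‖φ j‖ := by
          refine Finset.sum_congr rfl fun j _ => ?_
          rw [norm_mul, Matrix.map_apply, Complex.norm_real,
            Real.norm_of_nonneg (hnn i j)]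
  unfold vecPNormE
  split_ifs with h
  · refine Real.iSup_le (fun i => ?_) (Real.iSup_nonneg fun i => norm_nonneg _)
    calc ‖(C.map Complex.ofReal).mulVec φ i‖ ≤ ∑ j, C i j * ‖φ j‖ := key i
      _ ≤ ∑ j, C i j * ⨆ k, ‖φ k‖ := by
          refine Finset.sum_le_sum fun j _ => mul_le_mul_of_nonneg_left ?_ (hnn i j)
          exact le_ciSup (f := fun k => ‖φ k‖) (Set.Finite.bddAbove (Set.finite_range _)) j
      _ = ⨆ k, ‖φ k‖ := by rw [← Finset.sum_mul, hrow i, one_mul]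
  · have hp1 : 1 ≤ s.toReal := one_le_toReal_of_ne_top hs h
    have hp0 : 0 < s.toReal := zero_lt_one.trans_le hp1
    refine Real.rpow_le_rpow
      (Finset.sum_nonneg fun i _ => Real.rpow_nonneg (norm_nonneg _) _) ?_ (by positivity)
    calc ∑ i, ‖(C.map Complex.ofReal).mulVec φ i‖ ^ s.toReal
        ≤ ∑ i, (∑ j, C i j * ‖φ j‖) ^ s.toReal :=
          Finset.sum_le_sum fun i _ =>
            Real.rpow_le_rpow (norm_nonneg _) (key i) hp0.le
      _ ≤ ∑ i, ∑ j, C i j * ‖φ j‖ ^ s.toReal :=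
          Finset.sum_le_sum fun i _ =>
            Real.rpow_arith_mean_le_arith_mean_rpow Finset.univ (C i) (fun j => ‖φ j‖)
              (fun j _ => hnn i j) (hrow i) (fun j _ => norm_nonneg _) hp1
      _ = ∑ j, (∑ i, C i j) * ‖φ j‖ ^ s.toReal := by
          rw [Finset.sum_comm]
          exact Finset.sum_congr rfl fun j _ => (Finset.sum_mul _ _ _).symm
      _ = ∑ j, ‖φ j‖ ^ s.toReal := by
          refine Finset.sum_congr rfl fun j _ => ?_
          rw [hcol j, one_mul]

/-- **Identity gives an upper bound.** For any `d×d` doubly stochastic matrix `C` and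
exponents `r, s ∈ [1, ∞]`, `‖C‖_{r→s} ≤ ‖𝟙_d‖_{r→s}`. -/
theorem matPNormE_doublyStochastic_le_identity {d : ℕ} (C : Matrix (Fin d) (Fin d) ℝ)
    (hnn : ∀ i j, 0 ≤ C i j) (hrow : ∀ i, ∑ j, C i j = 1) (hcol : ∀ j, ∑ i, C i j = 1)
    (r s : ℝ≥0∞) (hr : 1 ≤ r) (hs : 1 ≤ s) :
    matPNormE r s (C.map Complex.ofReal) ≤ matPNormE r s (1 : Matrix (Fin d) (Fin d) ℂ) := by
  rcases Nat.eq_zero_or_pos d with hd | hd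
  · subst hd
    have hempty : ∀ (A : Matrix (Fin 0) (Fin 0) ℂ),
        {t : ℝ | ∃ φ : Fin 0 → ℂ, φ ≠ 0 ∧
          t = vecPNormE s (A.mulVec φ) / vecPNormE r φ} = ∅ := by
      intro A
      ext t
      simp only [Set.mem_setOf_eq, Set.mem_empty_iff_false, iff_false]
      rintro ⟨φ, hφ, -⟩
      exact hφ (funext fun i => absurd i.2 (by omega))
    rw [matPNormE, matPNormE, hempty, hempty]
  · -- bound on the identity ratio set
    have hbdd : BddAbove {t : ℝ | ∃ φ : Fin d → ℂ, φ ≠ 0 ∧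
        t = vecPNormE s ((1 : Matrix (Fin d) (Fin d) ℂ).mulVec φ) / vecPNormE r φ} := by
      refine ⟨(d : ℝ), ?_⟩
      rintro t ⟨φ, hφ, rfl⟩
      have hpos : 0 < vecPNormE r φ := vecPNormE_pos hr hφ
      rw [div_le_iff₀ hpos, Matrix.one_mulVec]
      calc vecPNormE s φ ≤ ∑ i, ‖φ i‖ := vecPNormE_le_sum hs φ
        _ ≤ ∑ _i : Fin d, vecPNormE r φ :=
            Finset.sum_le_sum fun i _ => norm_le_vecPNormE hr φ i
        _ = (d : ℝ) * vecPNormE r φ := by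
            rw [Finset.sum_const, Finset.card_univ, Fintype.card_fin, nsmul_eq_mul]
    have hne : {t : ℝ | ∃ φ : Fin d → ℂ, φ ≠ 0 ∧
        t = vecPNormE s ((C.map Complex.ofReal).mulVec φ) / vecPNormE r φ}.Nonempty := by
      refine ⟨_, fun _ => 1, ?_, rfl⟩
      intro h
      have := congrFun h ⟨0, hd⟩
      simp at this
    refine csSup_le hne ?_
    rintro t ⟨φ, hφ, rfl⟩
    have hpos : 0 < vecPNormE r φ := vecPNormE_pos hr hφ
    have hle : vecPNormE s ((C.map Complex.ofReal).mulVec φ) / vecPNormE r φ ≤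
        vecPNormE s ((1 : Matrix (Fin d) (Fin d) ℂ).mulVec φ) / vecPNormE r φ := by
      rw [Matrix.one_mulVec]
      exact div_le_div_of_nonneg_right (vecPNormE_mulVec_le C hnn hrow hcol hs φ) hpos.le
    exact hle.trans (le_csSup hbdd ⟨φ, hφ, rfl⟩)
end

section
/- (Exact norm for s ≤ r.) Let C be a d×d doubly stochastic real matrix and let r, s be exponents with 1 ≤ s ≤ r < ∞. Then ‖C‖_{r→s} = d^{1/s − 1/r}; in particular the norm coincides with that of the d×d matrix with all entries equal to 1/d. -/
open scoped BigOperators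

/-- The vector `p`-norm of a complex vector, for a real exponent `p`. -/
noncomputable def vecPNorm {n : Type*} [Fintype n] (p : ℝ) (v : n → ℂ) : ℝ :=
  (∑ i, ‖v i‖ ^ p) ^ (1 / p)

/-- The `(r → s)` operator norm of a complex matrix, for real exponents. -/
noncomputable def matPNorm {m n : Type*} [Fintype m] [Fintype n] (r s : ℝ)
    (C : Matrix m n ℂ) : ℝ :=
  sSup {t : ℝ | ∃ φ : n → ℂ, φ ≠ 0 ∧ t = vecPNorm s (C.mulVec φ) / vecPNorm r φ}

/-!
The all-ones vector is fixed by a row-stochastic matrix, which gives the lower bound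
`d^(1/s) / d^(1/r)`. For the upper bound, a doubly stochastic matrix is an `ℓ^r`-contraction
(Jensen's inequality row by row, then the column sums), and on `d` points the power-mean
inequality gives `‖v‖_s ≤ d^(1/s - 1/r) ‖v‖_r`.
-/

open Finset Matrix

section VecPNorm

variable {ι : Type*} [Fintype ι]

lemma vecPNorm_nonneg (p : ℝ) (v : ι → ℂ) : 0 ≤ vecPNorm p v :=
  Real.rpow_nonneg (sum_nonneg fun i _ => Real.rpow_nonneg (norm_nonneg (v i)) p) _

lemma vecPNorm_one (p : ℝ) : vecPNorm p (1 : ι → ℂ) = (Fintype.card ι : ℝ) ^ (1 / p) := by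
  simp [vecPNorm]

lemma vecPNorm_le_card_rpow_mul_vecPNorm {r s : ℝ} (hs : 0 < s) (hsr : s ≤ r) (v : ι → ℂ) :
    vecPNorm s v ≤ (Fintype.card ι : ℝ) ^ (1 / s - 1 / r) * vecPNorm r v := by
  have hr : 0 < r := hs.trans_le hsr
  have hcard : (0 : ℝ) ≤ Fintype.card ι := Nat.cast_nonneg _
  have hS : 0 ≤ ∑ i, ‖v i‖ ^ s := sum_nonneg fun i _ => Real.rpow_nonneg (norm_nonneg _) _
  have hpow : ∀ i, (‖v i‖ ^ s) ^ (r / s) = ‖v i‖ ^ r := fun i => by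
    rw [← Real.rpow_mul (norm_nonneg _), mul_div_cancel₀ r hs.ne']
  have hmean : (∑ i, ‖v i‖ ^ s) ^ (r / s) ≤
      (Fintype.card ι : ℝ) ^ (r / s - 1) * ∑ i, ‖v i‖ ^ r := by
    simpa only [hpow, card_univ] using
      Real.rpow_sum_le_const_mul_sum_rpow_of_nonneg (s := univ) (f := fun i => ‖v i‖ ^ s)
        ((one_le_div hs).mpr hsr) fun i _ => Real.rpow_nonneg (norm_nonneg _) _
  calc vecPNorm s v = ((∑ i, ‖v i‖ ^ s) ^ (r / s)) ^ (1 / r) := by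
        rw [vecPNorm, ← Real.rpow_mul hS]; field_simp
    _ ≤ ((Fintype.card ι : ℝ) ^ (r / s - 1) * ∑ i, ‖v i‖ ^ r) ^ (1 / r) :=
        Real.rpow_le_rpow (Real.rpow_nonneg hS _) hmean (by positivity)
    _ = (Fintype.card ι : ℝ) ^ (1 / s - 1 / r) * vecPNorm r v := by
        rw [Real.mul_rpow (Real.rpow_nonneg hcard _)
          (sum_nonneg fun i _ => Real.rpow_nonneg (norm_nonneg _) _), ← Real.rpow_mul hcard,
          vecPNorm]
        congr 2
        field_simp

end VecPNorm

section Stochastic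

variable {m n : Type*} [Fintype n] {C : Matrix m n ℝ}

lemma mulVec_one_of_sum_row_eq_one (hrow : ∀ i, ∑ j, C i j = 1) :
    C.map Complex.ofReal *ᵥ 1 = 1 := by
  ext i
  simp [mulVec, dotProduct, ← Complex.ofReal_sum, hrow i]

lemma norm_mulVec_le_of_nonneg (hnn : ∀ i j, 0 ≤ C i j) (φ : n → ℂ) (i : m) :
    ‖(C.map Complex.ofReal *ᵥ φ) i‖ ≤ ∑ j, C i j * ‖φ j‖ := by
  refine (norm_sum_le _ _).trans_eq (sum_congr rfl fun j _ => ?_)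
  change ‖(C i j : ℂ) * φ j‖ = _
  rw [norm_mul, Complex.norm_real, Real.norm_of_nonneg (hnn i j)]

lemma vecPNorm_mulVec_le_of_stochastic [Fintype m] (hnn : ∀ i j, 0 ≤ C i j)
    (hrow : ∀ i, ∑ j, C i j = 1) (hcol : ∀ j, ∑ i, C i j ≤ 1) {r : ℝ} (hr : 1 ≤ r)
    (φ : n → ℂ) :
    vecPNorm r (C.map Complex.ofReal *ᵥ φ) ≤ vecPNorm r φ := by
  have hr0 : 0 < r := one_pos.trans_le hr
  have hsum : ∑ i, ‖(C.map Complex.ofReal *ᵥ φ) i‖ ^ r ≤ ∑ j, ‖φ j‖ ^ r :=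
    calc ∑ i, ‖(C.map Complex.ofReal *ᵥ φ) i‖ ^ r
        ≤ ∑ i, (∑ j, C i j * ‖φ j‖) ^ r :=
          sum_le_sum fun i _ =>
            Real.rpow_le_rpow (norm_nonneg _) (norm_mulVec_le_of_nonneg hnn φ i) hr0.le
      _ ≤ ∑ i, ∑ j, C i j * ‖φ j‖ ^ r :=
          sum_le_sum fun i _ => Real.rpow_arith_mean_le_arith_mean_rpow univ (C i) _
            (fun j _ => hnn i j) (hrow i) (fun j _ => norm_nonneg _) hr
      _ = ∑ j, (∑ i, C i j) * ‖φ j‖ ^ r := by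
          rw [sum_comm]; simp only [sum_mul]
      _ ≤ ∑ j, ‖φ j‖ ^ r :=
          sum_le_sum fun j _ =>
            mul_le_of_le_one_left (Real.rpow_nonneg (norm_nonneg _) _) (hcol j)
  exact Real.rpow_le_rpow (sum_nonneg fun i _ => Real.rpow_nonneg (norm_nonneg _) _) hsum
    (by positivity)

end Stochastic

/-- **Exact norm for `s ≤ r`.** For any `d×d` doubly stochastic matrix `C` and
exponents `1 ≤ s ≤ r < ∞`, `‖C‖_{r→s} = d^(1/s - 1/r)`, the MUB value. -/
theorem matPNorm_doublyStochastic_eq_of_le {d : ℕ} (hd : 0 < d)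
    (C : Matrix (Fin d) (Fin d) ℝ)
    (hnn : ∀ i j, 0 ≤ C i j) (hrow : ∀ i, ∑ j, C i j = 1) (hcol : ∀ j, ∑ i, C i j = 1)
    (r s : ℝ) (hs : 1 ≤ s) (hsr : s ≤ r) :
    matPNorm r s (C.map Complex.ofReal) = (d : ℝ) ^ (1 / s - 1 / r) := by
  apply IsGreatest.csSup_eq
  refine ⟨⟨1, Function.ne_iff.mpr ⟨⟨0, hd⟩, one_ne_zero⟩, ?_⟩, ?_⟩
  · rw [mulVec_one_of_sum_row_eq_one hrow, vecPNorm_one, vecPNorm_one, Fintype.card_fin,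
      ← Real.rpow_sub (Nat.cast_pos.mpr hd)]
  · rintro _ ⟨φ, -, rfl⟩
    refine div_le_of_le_mul₀ (vecPNorm_nonneg r φ) (Real.rpow_nonneg d.cast_nonneg _) ?_
    calc vecPNorm s (C.map Complex.ofReal *ᵥ φ)
        ≤ (d : ℝ) ^ (1 / s - 1 / r) * vecPNorm r (C.map Complex.ofReal *ᵥ φ) := by
          simpa only [Fintype.card_fin] using
            vecPNorm_le_card_rpow_mul_vecPNorm (ι := Fin d) (one_pos.trans_le hs) hsr _
      _ ≤ (d : ℝ) ^ (1 / s - 1 / r) * vecPNorm r φ :=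
          mul_le_mul_of_nonneg_left (vecPNorm_mulVec_le_of_stochastic hnn hrow
            (fun j => (hcol j).le) (hs.trans hsr) φ) (Real.rpow_nonneg d.cast_nonneg _)
end

section
/- (Optimal randomness bound.) Let σ ∈ [0,1) and let Δ_X, Δ_Y be real numbers with 0 ≤ Δ_X ≤ Δ_Y and Δ_Y > 0. Consider the region R = {(λ, μ) ∈ [0,1]² : (1−μ)(1−λ) ≥ μ λ σ²}. Then the supremum over (λ, μ) ∈ R of μΔ_Y − (1−λ)Δ_X equals (√Δ_Y − σ√Δ_X)² / (1−σ²) if Δ_X ≥ σ²Δ_Y, and equals Δ_Y − Δ_X if Δ_X < σ²Δ_Y. -/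
lemma amgm_aux (u v σ x y : ℝ) (hu : 0 ≤ u) (hv : 0 ≤ v)
    (hσ0 : 0 ≤ σ) (hx0 : 0 ≤ x) (hy0 : 0 ≤ y) (huv : σ ^ 2 ≤ u * v) :
    2 * σ * x * y ≤ u * x ^ 2 + v * y ^ 2 := by
  have hA : 0 ≤ u * x ^ 2 + v * y ^ 2 := by positivity
  have hB : 0 ≤ 2 * σ * x * y := by positivity
  have hsq : (2 * σ * x * y) ^ 2 ≤ (u * x ^ 2 + v * y ^ 2) ^ 2 := by
    nlinarith [sq_nonneg (u * x ^ 2 - v * y ^ 2),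
      mul_nonneg (sub_nonneg.2 huv) (by positivity : (0:ℝ) ≤ x ^ 2 * y ^ 2)]
  nlinarith [hsq, hA, hB]

lemma ub_case1 (σ lam μ x y : ℝ) (hσ0 : 0 ≤ σ) (hσ1 : σ < 1)
    (hl0 : 0 ≤ lam) (hl1 : lam ≤ 1) (hm0 : 0 ≤ μ) (hm1 : μ ≤ 1)
    (hx0 : 0 ≤ x) (hy0 : 0 ≤ y)
    (hcon : μ * lam * σ ^ 2 ≤ (1 - μ) * (1 - lam)) :
    (μ * y ^ 2 - (1 - lam) * x ^ 2) * (1 - σ ^ 2) ≤ (y - σ * x) ^ 2 := by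
  have h1σ : (0:ℝ) < 1 - σ ^ 2 := by nlinarith
  obtain ⟨u, hu⟩ : ∃ u : ℝ, u = (1 - lam) * (1 - σ ^ 2) + σ ^ 2 := ⟨_, rfl⟩
  obtain ⟨v, hv⟩ : ∃ v : ℝ, v = (1 - μ) * (1 - σ ^ 2) + σ ^ 2 := ⟨_, rfl⟩
  have hu0 : 0 ≤ u := by rw [hu]; nlinarith
  have hv0 : 0 ≤ v := by rw [hv]; nlinarith
  have huv : σ ^ 2 ≤ u * v := by
    have h := mul_nonneg h1σ.le (sub_nonneg.2 hcon)
    nlinarith [h, hu, hv]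
  have key := amgm_aux u v σ x y hu0 hv0 hσ0 hx0 hy0 huv
  nlinarith [key, hu, hv]

/-- **Optimal randomness bound.** For `σ ∈ [0,1)` and `0 ≤ Δ_X ≤ Δ_Y`, `Δ_Y > 0`, the
supremum of `μΔ_Y - (1-λ)Δ_X` over the region
`R = {(λ,μ) ∈ [0,1]² : (1-μ)(1-λ) ≥ μλσ²}` equals
`(√Δ_Y - σ√Δ_X)²/(1-σ²)` if `Δ_X ≥ σ²Δ_Y`, and `Δ_Y - Δ_X` otherwise. -/
theorem optimal_randomness_bound (σ ΔX ΔY : ℝ)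
    (hσ0 : 0 ≤ σ) (hσ1 : σ < 1) (hX0 : 0 ≤ ΔX) (hXY : ΔX ≤ ΔY) (hY0 : 0 < ΔY) :
    sSup {v : ℝ | ∃ lam μ : ℝ, lam ∈ Set.Icc (0 : ℝ) 1 ∧ μ ∈ Set.Icc (0 : ℝ) 1 ∧
        (1 - μ) * (1 - lam) ≥ μ * lam * σ ^ 2 ∧ v = μ * ΔY - (1 - lam) * ΔX}
      = if σ ^ 2 * ΔY ≤ ΔX
          then (Real.sqrt ΔY - σ * Real.sqrt ΔX) ^ 2 / (1 - σ ^ 2)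
          else ΔY - ΔX := by
  have h1σ : (0:ℝ) < 1 - σ ^ 2 := by nlinarith
  set x := Real.sqrt ΔX with hxdef
  set y := Real.sqrt ΔY with hydef
  have hx2 : x ^ 2 = ΔX := Real.sq_sqrt hX0
  have hy2 : y ^ 2 = ΔY := Real.sq_sqrt hY0.le
  have hx0 : 0 ≤ x := Real.sqrt_nonneg _
  have hy0 : 0 < y := Real.sqrt_pos.mpr hY0
  split_ifs with hcase
  · -- case σ²ΔY ≤ ΔX
    have hcx : σ ^ 2 * y ^ 2 ≤ x ^ 2 := by rw [hx2, hy2]; exact hcase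
    apply IsGreatest.csSup_eq
    constructor
    · -- membership: the bound is attained
      by_cases hX : ΔX = 0
      · have hσz : σ = 0 := by
          by_contra h
          have hσp : 0 < σ ^ 2 := by positivity
          nlinarith [hcase, hY0]
        refine ⟨1, 1, ⟨zero_le_one, le_refl 1⟩, ⟨zero_le_one, le_refl 1⟩,
          by rw [hσz]; norm_num, ?_⟩
        rw [hσz, hX, ← hy2]
        norm_num
      · have hxp : 0 < x := lt_of_le_of_ne hx0 (by
          intro h; exact hX (by rw [← hx2, ← h]; ring))
        have hσyx : σ * y ≤ x := by nlinarith [hcx, mul_nonneg hσ0 hy0.le, hxp]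
        have hσxy : σ * x ≤ y := by nlinarith [Real.sqrt_le_sqrt hXY, hσ1, hx0]
        refine ⟨(1 - σ * y / x) / (1 - σ ^ 2), (1 - σ * x / y) / (1 - σ ^ 2),
          ⟨?_, ?_⟩, ⟨?_, ?_⟩, ?_, ?_⟩
        · apply div_nonneg _ h1σ.le
          rw [sub_nonneg, div_le_one hxp]; exact hσyx
        · rw [div_le_one h1σ]
          have : σ ^ 2 ≤ σ * y / x := by
            rw [le_div_iff₀ hxp]
            nlinarith [mul_le_mul_of_nonneg_left hσxy hσ0]
          linarith
        · apply div_nonneg _ h1σ.le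
          rw [sub_nonneg, div_le_one hy0]; exact hσxy
        · rw [div_le_one h1σ]
          have : σ ^ 2 ≤ σ * x / y := by
            rw [le_div_iff₀ hy0]
            nlinarith [mul_le_mul_of_nonneg_left hσyx hσ0]
          linarith
        · apply ge_of_eq
          field_simp
          ring
        · rw [← hx2, ← hy2]
          field_simp
          ring
    · rintro v ⟨lam, μ, ⟨hl0, hl1⟩, ⟨hm0, hm1⟩, hcon, rfl⟩
      rw [le_div_iff₀ h1σ, ← hx2, ← hy2]
      exact ub_case1 σ lam μ x y hσ0 hσ1 hl0 hl1 hm0 hm1 hx0 hy0.le hcon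
  · -- case ΔX < σ²ΔY
    push_neg at hcase
    apply IsGreatest.csSup_eq
    constructor
    · exact ⟨0, 1, ⟨le_refl 0, zero_le_one⟩, ⟨zero_le_one, le_refl 1⟩,
        by norm_num, by ring⟩
    · rintro v ⟨lam, μ, ⟨hl0, hl1⟩, ⟨hm0, hm1⟩, hcon, rfl⟩
      have hb : lam * σ ^ 2 ≤ 1 - μ := by
        nlinarith [hcon, mul_nonneg (mul_nonneg (by linarith : (0:ℝ) ≤ 1 - μ) hl0) h1σ.le]
      have h3 : lam * σ ^ 2 * ΔY ≤ (1 - μ) * ΔY := mul_le_mul_of_nonneg_right hb hY0.le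
      have h4 : lam * ΔX ≤ lam * (σ ^ 2 * ΔY) := mul_le_mul_of_nonneg_left hcase.le hl0
      nlinarith [h3, h4]
end

section
/- (Optimal weights for entanglement detection.) Let σ ∈ (0,1) and let Δ_X, Δ_Y > 0 with σ² ≤ Δ_X/Δ_Y ≤ 1/σ², and set γ = √(Δ_X/Δ_Y). Consider the region R = {(λ, μ) ∈ [0,1]² : (1−μ)(1−λ) ≥ μ λ σ²}. Then the supremum over (λ, μ) ∈ R of λΔ_X + μΔ_Y equals (Δ_X + Δ_Y − 2σ√(Δ_X Δ_Y)) / (1−σ²), and it is attained at μ = (1−σγ)/(1−σ²), λ = (1−σ/γ)/(1−σ²). -/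
/-- **Optimal weights for entanglement detection.** For `σ ∈ (0,1)`, `Δ_X, Δ_Y > 0` with
`σ² ≤ Δ_X/Δ_Y ≤ 1/σ²`, and `γ = √(Δ_X/Δ_Y)`, the supremum of `λΔ_X + μΔ_Y` over
`R = {(λ,μ) ∈ [0,1]² : (1-μ)(1-λ) ≥ μλσ²}` equals
`(Δ_X + Δ_Y - 2σ√(Δ_X Δ_Y))/(1-σ²)`, and it is attained at
`μ = (1-σγ)/(1-σ²)`, `λ = (1-σ/γ)/(1-σ²)`. -/
theorem optimal_weights_entanglement_detection (σ ΔX ΔY : ℝ)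
    (hσ0 : 0 < σ) (hσ1 : σ < 1) (hX0 : 0 < ΔX) (hY0 : 0 < ΔY)
    (hlow : σ ^ 2 ≤ ΔX / ΔY) (hhigh : ΔX / ΔY ≤ 1 / σ ^ 2) :
    sSup {v : ℝ | ∃ lam μ : ℝ, lam ∈ Set.Icc (0 : ℝ) 1 ∧ μ ∈ Set.Icc (0 : ℝ) 1 ∧
        (1 - μ) * (1 - lam) ≥ μ * lam * σ ^ 2 ∧ v = lam * ΔX + μ * ΔY}
      = (ΔX + ΔY - 2 * σ * Real.sqrt (ΔX * ΔY)) / (1 - σ ^ 2)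
    ∧ (1 - σ / Real.sqrt (ΔX / ΔY)) / (1 - σ ^ 2) ∈ Set.Icc (0 : ℝ) 1
    ∧ (1 - σ * Real.sqrt (ΔX / ΔY)) / (1 - σ ^ 2) ∈ Set.Icc (0 : ℝ) 1
    ∧ (1 - (1 - σ * Real.sqrt (ΔX / ΔY)) / (1 - σ ^ 2))
        * (1 - (1 - σ / Real.sqrt (ΔX / ΔY)) / (1 - σ ^ 2))
        ≥ ((1 - σ * Real.sqrt (ΔX / ΔY)) / (1 - σ ^ 2))
          * ((1 - σ / Real.sqrt (ΔX / ΔY)) / (1 - σ ^ 2)) * σ ^ 2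
    ∧ ((1 - σ / Real.sqrt (ΔX / ΔY)) / (1 - σ ^ 2)) * ΔX
        + ((1 - σ * Real.sqrt (ΔX / ΔY)) / (1 - σ ^ 2)) * ΔY
      = (ΔX + ΔY - 2 * σ * Real.sqrt (ΔX * ΔY)) / (1 - σ ^ 2) := by
  set g := Real.sqrt (ΔX / ΔY) with hgdef
  have hratio : 0 < ΔX / ΔY := div_pos hX0 hY0
  have hg0 : 0 < g := Real.sqrt_pos.mpr hratio
  have hg2 : g ^ 2 = ΔX / ΔY := Real.sq_sqrt hratio.le
  have hgX : ΔX = g ^ 2 * ΔY := by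
    rw [hg2]; field_simp
  have hc : (0:ℝ) < 1 - σ ^ 2 := by nlinarith
  have hcne : (1:ℝ) - σ ^ 2 ≠ 0 := ne_of_gt hc
  have hσle : σ ≤ g := by nlinarith [hg2, hlow]
  have hσg : σ * g ≤ 1 := by
    have h1 : (σ * g) ^ 2 ≤ 1 := by
      have : g ^ 2 ≤ 1 / σ ^ 2 := by rw [hg2]; exact hhigh
      calc (σ * g) ^ 2 = σ ^ 2 * g ^ 2 := by ring
        _ ≤ σ ^ 2 * (1 / σ ^ 2) := by nlinarith
        _ = 1 := by field_simp
    nlinarith [mul_pos hσ0 hg0]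
  have hsXY : Real.sqrt (ΔX * ΔY) = g * ΔY := by
    have : ΔX * ΔY = (g * ΔY) ^ 2 := by rw [hgX]; ring
    rw [this, Real.sqrt_sq (by positivity)]
  -- the candidate point and value
  set lam0 : ℝ := (1 - σ / g) / (1 - σ ^ 2) with hlam0
  set mu0 : ℝ := (1 - σ * g) / (1 - σ ^ 2) with hmu0
  set V : ℝ := (ΔX + ΔY - 2 * σ * Real.sqrt (ΔX * ΔY)) / (1 - σ ^ 2) with hV
  have hσdg : σ / g ≤ 1 := (div_le_one hg0).mpr hσle
  have hlamIcc : lam0 ∈ Set.Icc (0:ℝ) 1 := by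
    constructor
    · apply div_nonneg (by linarith) hc.le
    · rw [div_le_one hc]
      have : σ ^ 2 ≤ σ / g := by
        rw [le_div_iff₀ hg0]; nlinarith
      linarith
  have hmuIcc : mu0 ∈ Set.Icc (0:ℝ) 1 := by
    constructor
    · apply div_nonneg (by linarith) hc.le
    · rw [div_le_one hc]
      nlinarith
  have hgne : g ≠ 0 := ne_of_gt hg0
  have hcon : (1 - mu0) * (1 - lam0) ≥ mu0 * lam0 * σ ^ 2 := by
    apply ge_of_eq
    rw [hmu0, hlam0]
    field_simp
    ring
  have heq : lam0 * ΔX + mu0 * ΔY = V := by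
    rw [hlam0, hmu0, hV, hsXY, hgX]
    field_simp
    ring
  clear_value g lam0 mu0 V
  refine ⟨?_, hlamIcc, hmuIcc, hcon, heq⟩
  -- the sSup computation
  have hub : ∀ v ∈ {v : ℝ | ∃ lam μ : ℝ, lam ∈ Set.Icc (0 : ℝ) 1 ∧ μ ∈ Set.Icc (0 : ℝ) 1 ∧
      (1 - μ) * (1 - lam) ≥ μ * lam * σ ^ 2 ∧ v = lam * ΔX + μ * ΔY}, v ≤ V := by
    rintro v ⟨lam, μ, ⟨hl0, hl1⟩, ⟨hm0, hm1⟩, hR, rfl⟩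
    have hab : σ ^ 2 ≤ (1 - lam * (1 - σ ^ 2)) * (1 - μ * (1 - σ ^ 2)) := by
      nlinarith [mul_nonneg hc.le (sub_nonneg.mpr hR)]
    have hbpos : 0 < 1 - μ * (1 - σ ^ 2) := by
      have := mul_le_mul_of_nonneg_right hm1 hc.le
      have := pow_pos hσ0 2
      linarith
    have h1 : 0 ≤ (1 - μ * (1 - σ ^ 2)) *
        ((g ^ 2 * (1 - lam * (1 - σ ^ 2)) + (1 - μ * (1 - σ ^ 2))) - 2 * σ * g) := by
      have e : (1 - μ * (1 - σ ^ 2)) *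
          ((g ^ 2 * (1 - lam * (1 - σ ^ 2)) + (1 - μ * (1 - σ ^ 2))) - 2 * σ * g)
          = g ^ 2 * ((1 - lam * (1 - σ ^ 2)) * (1 - μ * (1 - σ ^ 2)) - σ ^ 2)
            + ((1 - μ * (1 - σ ^ 2)) - σ * g) ^ 2 := by ring
      rw [e]
      have h0 := mul_nonneg (sq_nonneg g) (sub_nonneg.mpr hab)
      have h0' := sq_nonneg ((1 - μ * (1 - σ ^ 2)) - σ * g)
      linarith
    have hkey : 2 * σ * g ≤ g ^ 2 * (1 - lam * (1 - σ ^ 2)) + (1 - μ * (1 - σ ^ 2)) := by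
      have h2 := (mul_nonneg_iff_of_pos_left hbpos).mp h1
      linarith
    rw [hV, hsXY, hgX, le_div_iff₀ hc]
    have h3 := mul_le_mul_of_nonneg_right hkey hY0.le
    linarith [h3]
  have hmem : V ∈ {v : ℝ | ∃ lam μ : ℝ, lam ∈ Set.Icc (0 : ℝ) 1 ∧ μ ∈ Set.Icc (0 : ℝ) 1 ∧
      (1 - μ) * (1 - lam) ≥ μ * lam * σ ^ 2 ∧ v = lam * ΔX + μ * ΔY} :=
    ⟨lam0, mu0, hlamIcc, hmuIcc, hcon, heq.symm⟩
  exact le_antisymm (csSup_le ⟨V, hmem⟩ hub) (le_csSup ⟨V, hub⟩ hmem)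
end
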